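/- arXiv:1901.06062 — 5 statements merged into one kernel-verified Lean document; each statement's English description precedes it below -/
import Mathlib

section
/- If γ : (0,∞) → [0,∞) is nondecreasing with ∫₀^{R₀} γ(r)/r² dr < ∞, then the function x ↦ γ(|x|) on ℝⁿ (extended by 0 at the origin) is differentiable at 0 with derivative 0. -/
open Set Filter MeasureTheory Topology

theorem gamma_norm_differentiable_at_zero (n : ℕ) (γ : ℝ → ℝ) (R₀ : ℝ) (hR₀ : 0 < R₀)
    (hnonneg : ∀ r ∈ Ioo 0 R₀, 0 ≤ γ r)
    (hmono : ∀ r ∈ Ioo 0 R₀, ∀ s ∈ Ioo 0 R₀, r ≤ s → γ r ≤ γ s)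
    (hint : MeasureTheory.IntegrableOn (fun r => γ r / r ^ 2) (Ioo 0 R₀))
    (g : EuclideanSpace ℝ (Fin n) → ℝ)
    (hg : ∀ x : EuclideanSpace ℝ (Fin n), x ≠ 0 → g x = γ ‖x‖) (hg0 : g 0 = 0) :
    HasFDerivAt g (0 : EuclideanSpace ℝ (Fin n) →L[ℝ] ℝ) 0 := by
  set b := R₀ / 2 with hbdef
  have hb0 : 0 < b := by positivity
  have hbR : b < R₀ := by simp only [hbdef]; linarith
  have hintIcc : IntegrableOn (fun r => γ r / r ^ 2) (Icc 0 b) := by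
    rw [integrableOn_Icc_iff_integrableOn_Ioc]
    exact hint.mono_set (fun x hx => ⟨hx.1, lt_of_le_of_lt hx.2 hbR⟩)
  have hcont : ContinuousOn (fun t => ∫ s in Ioc 0 t, γ s / s ^ 2) (Icc 0 b) :=
    intervalIntegral.continuousOn_primitive hintIcc
  have htend : Tendsto (fun t => ∫ s in Ioc (0:ℝ) t, γ s / s ^ 2) (𝓝[Icc 0 b] 0) (𝓝 0) := by
    have h := hcont 0 ⟨le_refl 0, hb0.le⟩
    have h0 : (∫ s in Ioc (0:ℝ) (0:ℝ), γ s / s ^ 2) = 0 := by simp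
    rwa [ContinuousWithinAt, h0] at h
  -- key estimate : for 0 < r with 2r ≤ b, γ r / (2r) ≤ ∫_{(0,2r]} γ s / s²
  have key : ∀ r : ℝ, 0 < r → 2 * r ≤ b →
      γ r / (2 * r) ≤ ∫ s in Ioc (0:ℝ) (2 * r), γ s / s ^ 2 := by
    intro r hr h2r
    have hrR : r < R₀ := by nlinarith
    have h2rR : 2 * r < R₀ := lt_of_le_of_lt h2r hbR
    have hrmem : r ∈ Ioo (0:ℝ) R₀ := ⟨hr, hrR⟩
    have hle : r ≤ 2 * r := by linarith
    -- integrability facts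
    have hint2 : IntegrableOn (fun s => γ s / s ^ 2) (Ioc 0 (2 * r)) :=
      hint.mono_set (fun x hx => ⟨hx.1, lt_of_le_of_lt hx.2 h2rR⟩)
    have hintr : IntegrableOn (fun s => γ s / s ^ 2) (Ioc r (2 * r)) :=
      hint2.mono_set (Ioc_subset_Ioc_left hr.le)
    have hcontc : ContinuousOn (fun s : ℝ => γ r / s ^ 2) (Icc r (2 * r)) := by
      apply continuousOn_const.div (continuousOn_pow 2)
      intro s hs
      have : 0 < s := lt_of_lt_of_le hr hs.1
      positivity
    have hintc : IntegrableOn (fun s : ℝ => γ r / s ^ 2) (Ioc r (2 * r)) :=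
      (hcontc.integrableOn_Icc).mono_set Ioc_subset_Icc_self
    -- compute ∫ s in Ioc r (2r), γ r / s² = γ r / (2r)
    have hcalc : (∫ s in Ioc r (2 * r), γ r / s ^ 2) = γ r / (2 * r) := by
      rw [← intervalIntegral.integral_of_le hle]
      have hzpow : ∀ s ∈ Set.uIcc r (2 * r), γ r / s ^ 2 = γ r * s ^ (-2 : ℤ) := by
        intro s hs
        rw [Set.uIcc_of_le hle] at hs
        have hs0 : (0:ℝ) < s := lt_of_lt_of_le hr hs.1
        rw [zpow_neg, zpow_two, div_eq_mul_inv, sq]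
      rw [intervalIntegral.integral_congr hzpow, intervalIntegral.integral_const_mul,
        integral_zpow]
      · have h2r0 : (0:ℝ) < 2 * r := by linarith
        have : (-2 : ℤ) + 1 = -1 := by norm_num
        rw [this]
        rw [zpow_neg_one, zpow_neg_one]
        push_cast
        field_simp
        ring
      · right
        constructor
        · norm_num
        · rw [Set.uIcc_of_le hle]
          intro h0
          exact absurd h0.1 (by linarith)
    -- monotone comparison on Ioc r (2r)
    have hmono' : (∫ s in Ioc r (2 * r), γ r / s ^ 2) ≤ ∫ s in Ioc r (2 * r), γ s / s ^ 2 := by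
      apply setIntegral_mono_on hintc hintr measurableSet_Ioc
      intro s hs
      have hs0 : (0:ℝ) < s := lt_of_lt_of_le hr hs.1.le
      have hsmem : s ∈ Ioo (0:ℝ) R₀ := ⟨hs0, lt_of_le_of_lt hs.2 h2rR⟩
      have : γ r ≤ γ s := hmono r hrmem s hsmem hs.1.le
      exact div_le_div_of_nonneg_right this (by positivity) |>.trans_eq rfl
    -- extend to Ioc 0 (2r)
    have hext : (∫ s in Ioc r (2 * r), γ s / s ^ 2) ≤ ∫ s in Ioc 0 (2 * r), γ s / s ^ 2 := by
      apply setIntegral_mono_set hint2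
      · filter_upwards [ae_restrict_mem measurableSet_Ioc] with s hs
        have hsmem : s ∈ Ioo (0:ℝ) R₀ := ⟨hs.1, lt_of_le_of_lt hs.2 h2rR⟩
        exact div_nonneg (hnonneg s hsmem) (sq_nonneg s)
      · exact (Ioc_subset_Ioc_left hr.le).eventuallyLE
    calc γ r / (2 * r) = ∫ s in Ioc r (2 * r), γ r / s ^ 2 := hcalc.symm
      _ ≤ ∫ s in Ioc r (2 * r), γ s / s ^ 2 := hmono'
      _ ≤ ∫ s in Ioc 0 (2 * r), γ s / s ^ 2 := hext
  -- now the little-o argument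
  rw [hasFDerivAt_iff_isLittleO_nhds_zero]
  simp only [zero_add, hg0, ContinuousLinearMap.zero_apply, sub_zero]
  rw [Asymptotics.isLittleO_iff]
  intro c hc
  obtain ⟨δ, hδ0, hδ⟩ := Metric.tendsto_nhdsWithin_nhds.mp htend (c / 2) (by linarith)
  have hδ' : 0 < min δ b := lt_min hδ0 hb0
  rw [Metric.eventually_nhds_iff]
  refine ⟨min δ b / 2, by positivity, ?_⟩
  intro h hh
  rcases eq_or_ne h 0 with rfl | hne
  · simp [hg0]
  · rw [hg h hne]
    set r := ‖h‖ with hrdef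
    have hr0 : 0 < r := norm_pos_iff.mpr hne
    have hrlt : r < min δ b / 2 := by
      rw [dist_zero_right] at hh; exact hh
    have h2rb : 2 * r ≤ b := by
      have := min_le_right δ b; linarith
    have h2rδ : 2 * r < δ := by
      have := min_le_left δ b; linarith
    have h2rmem : 2 * r ∈ Icc (0:ℝ) b := ⟨by linarith, h2rb⟩
    have hIbound : |∫ s in Ioc (0:ℝ) (2 * r), γ s / s ^ 2| < c / 2 := by
      have := hδ h2rmem (by rw [Real.dist_eq]; rw [abs_of_pos (by linarith)]; linarith)
      rwa [Real.dist_eq, sub_zero] at this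
    have hkey := key r hr0 h2rb
    have hγnn : 0 ≤ γ r := hnonneg r ⟨hr0, by nlinarith⟩
    have : γ r / (2 * r) ≤ c / 2 := le_trans hkey (le_of_lt (lt_of_le_of_lt (le_abs_self _) hIbound))
    have hγr : γ r ≤ c * r := by
      have h2r0 : (0:ℝ) < 2 * r := by linarith
      rw [div_le_iff₀ h2r0] at this
      linarith
    rw [Real.norm_eq_abs, abs_of_nonneg hγnn]
    exact hγr
end

section
/- Suppose a set S ⊆ ℝⁿ satisfies: for every boundary point x̃₀ of S there exists a unit vector ξ with ξ·(x̃ - x̃₀) ≥ 0 for all x̃ ∈ S. If S is open, then S is convex. -/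
open scoped RealInnerProductSpace

theorem convex_of_supporting_hyperplanes (n : ℕ) (S : Set (EuclideanSpace ℝ (Fin n)))
    (hSopen : IsOpen S)
    (hsupp : ∀ x₀ ∈ frontier S, ∃ ξ : EuclideanSpace ℝ (Fin n), ‖ξ‖ = 1 ∧
      ∀ x ∈ S, ⟪ξ, x - x₀⟫ ≥ 0) :
    Convex ℝ S := by
  intro x hx y hy a b ha hb hab
  by_contra hz
  set z := a • x + b • y with hzdef
  have hzseg : z ∈ segment ℝ x y := ⟨a, b, ha, hb, hab, rfl⟩
  -- find a frontier point on the segment from x to z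
  have hconn : IsPreconnected (segment ℝ x z) := (convex_segment x z).isPreconnected
  have hfront : (segment ℝ x z ∩ frontier S).Nonempty := by
    by_contra hne
    rw [Set.not_nonempty_iff_eq_empty] at hne
    have hsub : segment ℝ x z ⊆ S ∪ (closure S)ᶜ := by
      intro p hp
      by_cases hpS : p ∈ S
      · exact Or.inl hpS
      · by_cases hpc : p ∈ closure S
        · exfalso
          have : p ∈ frontier S := by
            rw [frontier, hSopen.interior_eq]
            exact ⟨hpc, hpS⟩
          exact Set.eq_empty_iff_forall_notMem.mp hne p ⟨hp, this⟩
        · exact Or.inr hpc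
    have h1 : (segment ℝ x z ∩ S).Nonempty := ⟨x, left_mem_segment _ _ _, hx⟩
    have h2 : (segment ℝ x z ∩ (closure S)ᶜ).Nonempty := by
      refine ⟨z, right_mem_segment _ _ _, ?_⟩
      intro hc
      by_cases hzS : z ∈ S
      · exact hz hzS
      · have : z ∈ frontier S := by
          rw [frontier, hSopen.interior_eq]; exact ⟨hc, hzS⟩
        exact Set.eq_empty_iff_forall_notMem.mp hne z ⟨right_mem_segment _ _ _, this⟩
    obtain ⟨p, hp⟩ := hconn S (closure S)ᶜ hSopen isClosed_closure.isOpen_compl hsub h1 h2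
    exact hp.2.2 (subset_closure hp.2.1)
  obtain ⟨x₀, hx₀seg, hx₀f⟩ := hfront
  obtain ⟨ξ, hξ1, hξ⟩ := hsupp x₀ hx₀f
  -- strict positivity on S
  have hstrict : ∀ p ∈ S, (0:ℝ) < ⟪ξ, p - x₀⟫ := by
    intro p hp
    rcases (hξ p hp).lt_or_eq with h | h
    · exact h
    · exfalso
      obtain ⟨ε, hε, hball⟩ := Metric.isOpen_iff.mp hSopen p hp
      have hmem : p - (ε/2) • ξ ∈ S := by
        apply hball
        rw [Metric.mem_ball, dist_eq_norm]
        have : p - (ε/2) • ξ - p = -((ε/2) • ξ) := by abel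
        rw [this, norm_neg, norm_smul, hξ1, mul_one, Real.norm_eq_abs,
          abs_of_pos (half_pos hε)]
        linarith
      have := hξ _ hmem
      rw [show p - (ε/2) • ξ - x₀ = (p - x₀) - (ε/2) • ξ by abel,
        inner_sub_right, real_inner_smul_right, real_inner_self_eq_norm_sq, hξ1] at this
      rw [← h] at this
      norm_num at this
      linarith
  -- x₀ lies on segment x y
  have hx₀xy : x₀ ∈ segment ℝ x y :=
    (convex_segment x y).segment_subset (left_mem_segment ℝ x y) hzseg hx₀seg
  obtain ⟨t, s, ht, hs, hts, hx₀eq⟩ := hx₀xy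
  have hA : (0:ℝ) < ⟪ξ, x - x₀⟫ := hstrict x hx
  have hB : (0:ℝ) < ⟪ξ, y - x₀⟫ := hstrict y hy
  have hs' : s = 1 - t := by linarith
  subst hs'
  have hv : t • (x - x₀) + (1 - t) • (y - x₀) = (0 : EuclideanSpace ℝ (Fin n)) := by
    rw [← hx₀eq]; module
  have h2 : ⟪ξ, t • (x - x₀) + (1 - t) • (y - x₀)⟫ = 0 := by
    rw [hv, inner_zero_right]
  rw [inner_add_right, real_inner_smul_right, real_inner_smul_right] at h2
  rcases ht.lt_or_eq with htp | hte
  · nlinarith [mul_pos htp hA, mul_nonneg hs hB.le]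
  · rw [← hte] at h2
    linarith
end

section
/- Let f : (0,1] → [0,∞) be nondecreasing, 0 < δ < 1, α > 0, μ = δ^α. Then for every m ≥ 3, ∑_{i=1}^{m-2} f(δ^i)/μ^{i+1} ≤ (1/((1-δ) δ^{2α})) ∫_{δ^{m-1}}^1 f(r)/r^{1+α} dr. -/
/-!
On the shell `[δ^(k+1), δ^k]` the integrand `f r / r^(1+α)` is at least
`f (δ^(k+1)) / (δ^k)^(1+α)`, because `f` is nondecreasing and `r^(1+α)` is increasing. The shell
has length `(1-δ) δ^k`, so `(1-δ) δ^(2α)` times the integral over it dominates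
`f (δ^(k+1)) / μ^(k+2)`. Summing over the shells `k < m-2` gives the integral over `[δ^(m-2), 1]`,
which is at most the one over `[δ^(m-1), 1]` since the integrand is nonnegative.
-/

open Set MeasureTheory intervalIntegral

section DivRpow

variable {f : ℝ → ℝ} {a b p : ℝ}

lemma intervalIntegrable_div_rpow_of_monotoneOn (hf : MonotoneOn f (Icc a b)) (ha : 0 < a)
    (hab : a ≤ b) : IntervalIntegrable (fun r => f r / r ^ p) volume a b := by
  rw [intervalIntegrable_iff_integrableOn_Icc_of_le hab]
  have hpos : ∀ r ∈ Icc a b, 0 < r := fun r hr => ha.trans_le hr.1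
  have hcont : ContinuousOn (fun r : ℝ => (r ^ p)⁻¹) (Icc a b) :=
    (continuousOn_id.rpow_const fun r hr => Or.inl (hpos r hr).ne').inv₀
      fun r hr => (Real.rpow_pos_of_pos (hpos r hr) p).ne'
  simpa only [div_eq_mul_inv] using
    (hf.integrableOn_isCompact isCompact_Icc).mul_continuousOn hcont isCompact_Icc

lemma sub_mul_div_rpow_le_integral_div_rpow (hf : MonotoneOn f (Icc a b)) (hfa : 0 ≤ f a)
    (ha : 0 < a) (hab : a ≤ b) (hp : 0 ≤ p) :
    (b - a) / b ^ p * f a ≤ ∫ r in a..b, f r / r ^ p := by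
  have hlower : ∀ r ∈ Icc a b, f a / b ^ p ≤ f r / r ^ p := fun r hr =>
    have hr0 : 0 < r := ha.trans_le hr.1
    have hfr : f a ≤ f r := hf (left_mem_Icc.2 hab) hr hr.1
    div_le_div₀ (hfa.trans hfr) hfr (Real.rpow_pos_of_pos hr0 p)
      (Real.rpow_le_rpow hr0.le hr.2 hp)
  simpa only [intervalIntegral.integral_const, smul_eq_mul, mul_div_assoc', div_mul_eq_mul_div]
    using integral_mono_on hab intervalIntegrable_const
      (intervalIntegrable_div_rpow_of_monotoneOn hf ha hab) hlower

end DivRpow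

lemma pow_sub_pow_succ_div_rpow {δ : ℝ} (hδ : 0 < δ) (α : ℝ) (i : ℕ) :
    (δ ^ i - δ ^ (i + 1)) / (δ ^ i) ^ (1 + α) =
      (1 - δ) * δ ^ (2 * α) / (δ ^ α) ^ (i + 2) := by
  have hpow : (δ ^ i) ^ (1 + α) = δ ^ i * (δ ^ α) ^ i := by
    rw [Real.rpow_add (pow_pos hδ i), Real.rpow_one, Real.rpow_pow_comm hδ.le]
  have hsq : δ ^ (2 * α) = (δ ^ α) ^ 2 := by
    rw [← Real.rpow_natCast, ← Real.rpow_mul hδ.le, mul_comm]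
    norm_num
  have hδα : 0 < δ ^ α := Real.rpow_pos_of_pos hδ α
  rw [hpow, hsq]
  field_simp
  ring

lemma sum_integral_pow_succ_pow {g : ℝ → ℝ} {δ : ℝ}
    (hg : ∀ k : ℕ, IntervalIntegrable g volume (δ ^ (k + 1)) (δ ^ k)) (n : ℕ) :
    ∑ k ∈ Finset.range n, ∫ r in δ ^ (k + 1)..δ ^ k, g r = ∫ r in δ ^ n..1, g r := by
  have h := sum_integral_adjacent_intervals (a := fun k => δ ^ k) (μ := volume) (n := n)
    fun k _ => (hg k).symm
  simp only [pow_zero] at h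
  rw [integral_symm, ← h, ← Finset.sum_neg_distrib]
  exact Finset.sum_congr rfl fun k _ => integral_symm _ _

section GeometricShells

variable {f : ℝ → ℝ} {δ α : ℝ}

lemma intervalIntegrable_div_rpow_of_monotoneOn_Ioc (hf : MonotoneOn f (Ioc 0 1)) {a b : ℝ}
    (ha : 0 < a) (hab : a ≤ b) (hb : b ≤ 1) :
    IntervalIntegrable (fun r => f r / r ^ α) volume a b :=
  intervalIntegrable_div_rpow_of_monotoneOn
    (hf.mono fun _ hr => ⟨ha.trans_le hr.1, hr.2.trans hb⟩) ha hab

lemma div_pow_le_integral_geometric_shell (hf : MonotoneOn f (Ioc 0 1))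
    (hf0 : ∀ r ∈ Ioc (0 : ℝ) 1, 0 ≤ f r) (hδ0 : 0 < δ) (hδ1 : δ < 1) (hα : 0 ≤ 1 + α)
    (k : ℕ) :
    f (δ ^ (k + 1)) / (δ ^ α) ^ (k + 2) ≤
      1 / ((1 - δ) * δ ^ (2 * α)) * ∫ r in δ ^ (k + 1)..δ ^ k, f r / r ^ (1 + α) := by
  have hsub : Icc (δ ^ (k + 1)) (δ ^ k) ⊆ Ioc 0 1 := fun r hr =>
    ⟨(pow_pos hδ0 _).trans_le hr.1, hr.2.trans (pow_le_one₀ hδ0.le hδ1.le)⟩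
  have hle : δ ^ (k + 1) ≤ δ ^ k := pow_le_pow_of_le_one hδ0.le hδ1.le k.le_succ
  have hδ1' : 0 < 1 - δ := by linarith
  calc f (δ ^ (k + 1)) / (δ ^ α) ^ (k + 2)
      = 1 / ((1 - δ) * δ ^ (2 * α)) *
          ((δ ^ k - δ ^ (k + 1)) / (δ ^ k) ^ (1 + α) * f (δ ^ (k + 1))) := by
        rw [pow_sub_pow_succ_div_rpow hδ0]
        field_simp
    _ ≤ 1 / ((1 - δ) * δ ^ (2 * α)) * ∫ r in δ ^ (k + 1)..δ ^ k, f r / r ^ (1 + α) := by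
        gcongr
        exact sub_mul_div_rpow_le_integral_div_rpow (hf.mono hsub)
          (hf0 _ (hsub (left_mem_Icc.2 hle))) (pow_pos hδ0 _) hle hα

lemma sum_div_pow_le_integral (hf : MonotoneOn f (Ioc 0 1))
    (hf0 : ∀ r ∈ Ioc (0 : ℝ) 1, 0 ≤ f r) (hδ0 : 0 < δ) (hδ1 : δ < 1) (hα : 0 ≤ 1 + α)
    (n : ℕ) :
    ∑ k ∈ Finset.range n, f (δ ^ (k + 1)) / (δ ^ α) ^ (k + 2) ≤
      1 / ((1 - δ) * δ ^ (2 * α)) * ∫ r in δ ^ n..1, f r / r ^ (1 + α) := by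
  have hint (k : ℕ) :
      IntervalIntegrable (fun r => f r / r ^ (1 + α)) volume (δ ^ (k + 1)) (δ ^ k) :=
    intervalIntegrable_div_rpow_of_monotoneOn_Ioc hf (pow_pos hδ0 _)
      (pow_le_pow_of_le_one hδ0.le hδ1.le k.le_succ) (pow_le_one₀ hδ0.le hδ1.le)
  rw [← sum_integral_pow_succ_pow hint, Finset.mul_sum]
  exact Finset.sum_le_sum fun k _ => div_pow_le_integral_geometric_shell hf hf0 hδ0 hδ1 hα k

end GeometricShells

theorem weighted_sum_le_integral (f : ℝ → ℝ) (δ α : ℝ) (hδ0 : 0 < δ) (hδ1 : δ < 1)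
    (hα : 0 < α)
    (hnonneg : ∀ r ∈ Ioc (0 : ℝ) 1, 0 ≤ f r)
    (hmono : ∀ r ∈ Ioc (0 : ℝ) 1, ∀ s ∈ Ioc (0 : ℝ) 1, r ≤ s → f r ≤ f s)
    (μ : ℝ) (hμ : μ = δ ^ α) :
    ∀ m : ℕ, 3 ≤ m →
      ∑ i ∈ Finset.Icc 1 (m - 2), f (δ ^ i) / μ ^ (i + 1) ≤
        (1 / ((1 - δ) * δ ^ (2 * α))) * ∫ r in Icc (δ ^ (m - 1)) 1, f r / r ^ (1 + α) := by
  intro m hm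
  obtain ⟨n, rfl⟩ : ∃ n, m = n + 2 := ⟨m - 2, by omega⟩
  subst hμ
  have hf : MonotoneOn f (Ioc 0 1) := fun r hr s hs => hmono r hr s hs
  have hpos : 0 < δ ^ (n + 1) := pow_pos hδ0 _
  have hle : δ ^ (n + 1) ≤ δ ^ n := pow_le_pow_of_le_one hδ0.le hδ1.le n.le_succ
  have hle_one : δ ^ n ≤ 1 := pow_le_one₀ hδ0.le hδ1.le
  have hreindex : ∑ i ∈ Finset.Icc 1 n, f (δ ^ i) / (δ ^ α) ^ (i + 1) =
      ∑ k ∈ Finset.range n, f (δ ^ (k + 1)) / (δ ^ α) ^ (k + 2) := by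
    rw [← Finset.Ico_add_one_right_eq_Icc, Finset.sum_Ico_eq_sum_range, Nat.add_sub_cancel]
    exact Finset.sum_congr rfl fun k _ => by ring_nf
  have hnonneg_integrand :
      0 ≤ᵐ[volume.restrict (Ioc (δ ^ (n + 1)) 1)] fun r => f r / r ^ (1 + α) :=
    ae_restrict_of_forall_mem measurableSet_Ioc fun r hr =>
      div_nonneg (hnonneg r ⟨hpos.trans hr.1, hr.2⟩) (Real.rpow_nonneg (hpos.trans hr.1).le _)
  rw [Nat.add_sub_cancel, show n + 2 - 1 = n + 1 from rfl, hreindex,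
    integral_Icc_eq_integral_Ioc, ← integral_of_le (hle.trans hle_one)]
  refine (sum_div_pow_le_integral hf hnonneg hδ0 hδ1 (by linarith : 0 ≤ 1 + α) n).trans ?_
  gcongr
  exact integral_mono_interval hle hle_one le_rfl hnonneg_integrand
    (intervalIntegrable_div_rpow_of_monotoneOn_Ioc hf hpos (hle.trans hle_one) le_rfl)
end

section
/- Let α > 0, 0 < δ < 1, m₀ ≥ 2, and f : (0,1] → [0,∞) nondecreasing. Then ∑_{j=m₀}^∞ δ^{jα} ∫_{δ^j}^{δ^{m₀-2}} f(r)/r^{1+α} dr ≤ (1/(α(1-δ)δ^α)) ( ∫_0^{δ^{m₀}} f(r)/r dr + δ^{m₀ α} ∫_{δ^{m₀}}^{δ^{m₀-2}} f(r)/r^{1+α} dr ), provided ∫_0^1 f(r)/r dr < ∞. -/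
/-!
Write `x k = a δ^k`, `T k = ∫_{x k}^{b} g(r) r^{-α} dr` and `G k = ∫_{x k}^{a} g`, where `g = f(r)/r`.
The increments `T (k+1) - T k` and `G (k+1) - G k` are integrals over the shell
`(x (k+1), x k]`, on which `r^{-α} ≤ x (k+1)^{-α}`, so `x (k+1)^α (T (k+1) - T k) ≤ G (k+1) - G k`.
Since the weights `x k ^ α` are geometric with ratio `q = δ^α`, summation by parts bounds
`(1 - q) ∑_{k<n} x k ^ α T k` by `G n + a^α T 0 ≤ ∫_0^a g + a^α T 0`, the bracket on the right. Finally
`δ^{-α} = exp (-α log δ) ≥ 1 + α (1 - δ)` gives `1 / (1 - q) ≤ 1 / (α (1 - δ) q)`.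
-/

open Set MeasureTheory Finset

theorem geometric_abel_summation_le {q : ℝ} {c T G : ℕ → ℝ} (hc : ∀ n, c (n + 1) = q * c n)
    (hstep : ∀ n, c (n + 1) * (T (n + 1) - T n) ≤ G (n + 1) - G n) (n : ℕ) :
    (1 - q) * ∑ k ∈ range n, c k * T k + c n * T n ≤ G n - G 0 + c 0 * T 0 := by
  induction n with
  | zero => simp
  | succ n ih =>
    rw [sum_range_succ, mul_add]
    have hn := hstep n
    rw [hc n] at hn ⊢
    linarith

theorem setIntegral_Ioc_add_Ioc {h : ℝ → ℝ} {a b c : ℝ} (hab : a ≤ b) (hbc : b ≤ c)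
    (hh : IntegrableOn h (Ioc a c)) :
    (∫ r in Ioc a b, h r) + ∫ r in Ioc b c, h r = ∫ r in Ioc a c, h r := by
  rw [← Ioc_union_Ioc_eq_Ioc hab hbc, setIntegral_union (Ioc_disjoint_Ioc_of_le le_rfl)
    measurableSet_Ioc (hh.mono_set (Ioc_subset_Ioc_right hbc))
    (hh.mono_set (Ioc_subset_Ioc_left hab))]

section

variable {g : ℝ → ℝ} {x y α : ℝ}

theorem MeasureTheory.IntegrableOn.div_rpow (hg : IntegrableOn g (Ioc x y)) (hx : 0 < x) :
    IntegrableOn (fun r => g r / r ^ α) (Ioc x y) := by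
  simp only [div_eq_mul_inv]
  refine hg.mul_continuousOn_of_subset ?_ measurableSet_Ioc isCompact_Icc Ioc_subset_Icc_self
  exact (continuousOn_id.rpow_const fun r hr => Or.inl (hx.trans_le hr.1).ne').inv₀
    fun r hr => (Real.rpow_pos_of_pos (hx.trans_le hr.1) α).ne'

theorem rpow_mul_setIntegral_div_rpow_le (hx : 0 < x) (hα : 0 ≤ α)
    (hg0 : ∀ r ∈ Ioc x y, 0 ≤ g r) (hg : IntegrableOn g (Ioc x y)) :
    x ^ α * ∫ r in Ioc x y, g r / r ^ α ≤ ∫ r in Ioc x y, g r := by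
  rw [← integral_const_mul]
  refine setIntegral_mono_on ((hg.div_rpow hx).const_mul _) hg measurableSet_Ioc fun r hr => ?_
  have hxr : x ^ α / r ^ α ≤ 1 :=
    div_le_one_of_le₀ (Real.rpow_le_rpow hx.le hr.1.le hα) (Real.rpow_nonneg (hx.trans hr.1).le α)
  rw [mul_div_left_comm]
  exact mul_le_of_le_one_right (hg0 r hr) hxr

end

theorem tsum_rpow_mul_setIntegral_div_rpow_le {g : ℝ → ℝ} {a b δ α : ℝ} (ha : 0 < a)
    (hab : a ≤ b) (hδ0 : 0 < δ) (hδ1 : δ < 1) (hα : 0 < α) (hg0 : ∀ r ∈ Ioc 0 b, 0 ≤ g r)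
    (hg : IntegrableOn g (Ioc 0 b)) :
    ∑' k : ℕ, (a * δ ^ k) ^ α * ∫ r in Ioc (a * δ ^ k) b, g r / r ^ α ≤
      (1 - δ ^ α)⁻¹ * ((∫ r in Ioc 0 a, g r) + a ^ α * ∫ r in Ioc a b, g r / r ^ α) := by
  set x : ℕ → ℝ := fun k => a * δ ^ k
  set T : ℕ → ℝ := fun k => ∫ r in Ioc (x k) b, g r / r ^ α
  set G : ℕ → ℝ := fun k => ∫ r in Ioc (x k) a, g r
  have hx0 (k : ℕ) : 0 < x k := mul_pos ha (pow_pos hδ0 k)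
  have hxa (k : ℕ) : x k ≤ a := mul_le_of_le_one_right ha.le (pow_le_one₀ hδ0.le hδ1.le)
  have hx_succ (k : ℕ) : x (k + 1) = δ * x k := by simp only [x, pow_succ]; ring
  have hx_anti (k : ℕ) : x (k + 1) ≤ x k := by
    rw [hx_succ]; exact mul_le_of_le_one_left (hx0 k).le hδ1.le
  have hgi {s t : ℝ} (hs : 0 ≤ s) (ht : t ≤ b) : IntegrableOn g (Ioc s t) :=
    hg.mono_set (Ioc_subset_Ioc hs ht)
  have hT0 (k : ℕ) : 0 ≤ T k := setIntegral_nonneg measurableSet_Ioc fun r hr =>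
    div_nonneg (hg0 r ⟨(hx0 k).trans hr.1, hr.2⟩) (Real.rpow_nonneg ((hx0 k).trans hr.1).le α)
  have hc (k : ℕ) : x (k + 1) ^ α = δ ^ α * x k ^ α := by
    rw [hx_succ, Real.mul_rpow hδ0.le (hx0 k).le]
  have hstep (k : ℕ) : x (k + 1) ^ α * (T (k + 1) - T k) ≤ G (k + 1) - G k := by
    have hT : T (k + 1) - T k = ∫ r in Ioc (x (k + 1)) (x k), g r / r ^ α :=
      sub_eq_of_eq_add (setIntegral_Ioc_add_Ioc (hx_anti k) ((hxa k).trans hab)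
        ((hgi (hx0 _).le le_rfl).div_rpow (hx0 _))).symm
    have hG : G (k + 1) - G k = ∫ r in Ioc (x (k + 1)) (x k), g r :=
      sub_eq_of_eq_add (setIntegral_Ioc_add_Ioc (hx_anti k) (hxa k) (hgi (hx0 _).le hab)).symm
    rw [hT, hG]
    exact rpow_mul_setIntegral_div_rpow_le (hx0 _) hα.le
      (fun r hr => hg0 r ⟨(hx0 _).trans hr.1, hr.2.trans ((hxa k).trans hab)⟩)
      (hgi (hx0 _).le ((hxa k).trans hab))
  have hq : 0 < 1 - δ ^ α := sub_pos.2 (Real.rpow_lt_one hδ0.le hδ1 hα)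
  have hpartial (n : ℕ) : (1 - δ ^ α) * ∑ k ∈ range n, x k ^ α * T k ≤
      (∫ r in Ioc 0 a, g r) + a ^ α * ∫ r in Ioc a b, g r / r ^ α := by
    have hsum := geometric_abel_summation_le (c := fun k => x k ^ α) hc hstep n
    have hG0 : G 0 = 0 := by simp [G, x]
    have hT0a : x 0 ^ α * T 0 = a ^ α * ∫ r in Ioc a b, g r / r ^ α := by simp [T, x]
    have hGn : G n ≤ ∫ r in Ioc 0 a, g r :=
      setIntegral_mono_set (hgi le_rfl hab)
        (ae_restrict_of_forall_mem measurableSet_Ioc fun r hr => hg0 r ⟨hr.1, hr.2.trans hab⟩)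
        (Ioc_subset_Ioc_left (hx0 n).le).eventuallyLE
    have hTn : 0 ≤ x n ^ α * T n := mul_nonneg (Real.rpow_nonneg (hx0 n).le α) (hT0 n)
    linarith
  refine Real.tsum_le_of_sum_range_le
    (fun k => mul_nonneg (Real.rpow_nonneg (hx0 k).le α) (hT0 k)) fun n => ?_
  rw [inv_mul_eq_div, le_div_iff₀' hq]
  exact hpartial n

theorem mul_one_sub_mul_rpow_le_one_sub_rpow {δ α : ℝ} (hδ : 0 < δ) (hα : 0 ≤ α) :
    α * (1 - δ) * δ ^ α ≤ 1 - δ ^ α := by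
  have hlog : α * (1 - δ) ≤ Real.log δ * -α := by
    nlinarith [Real.log_le_sub_one_of_pos hδ]
  have hinv : 1 + α * (1 - δ) ≤ δ ^ (-α) := by
    rw [Real.rpow_def_of_pos hδ]
    linarith [Real.add_one_le_exp (Real.log δ * -α)]
  have hprod : δ ^ (-α) * δ ^ α = 1 := by
    rw [← Real.rpow_add hδ, neg_add_cancel, Real.rpow_zero]
  nlinarith [mul_le_mul_of_nonneg_right hinv (Real.rpow_nonneg hδ.le α)]

theorem tail_sum_integral_bound_general (f : ℝ → ℝ) (δ α : ℝ) (hδ0 : 0 < δ) (hδ1 : δ < 1)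
    (hα : 0 < α) (m₀ : ℕ)
    (hnonneg : ∀ r ∈ Ioc (0 : ℝ) 1, 0 ≤ f r)
    (hdini : MeasureTheory.IntegrableOn (fun r => f r / r) (Ioc (0 : ℝ) 1)) :
    (∑' k : ℕ, δ ^ ((m₀ + k : ℕ) * α) *
        ∫ r in Ioc (δ ^ (m₀ + k)) (δ ^ (m₀ - 2)), f r / r ^ (1 + α)) ≤
      (1 / (α * (1 - δ) * δ ^ α)) *
        ((∫ r in Ioc (0 : ℝ) (δ ^ m₀), f r / r) +
          δ ^ (m₀ * α) * ∫ r in Ioc (δ ^ m₀) (δ ^ (m₀ - 2)), f r / r ^ (1 + α)) := by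
  set b := δ ^ (m₀ - 2)
  have hb : b ≤ 1 := pow_le_one₀ hδ0.le hδ1.le
  have hab : δ ^ m₀ ≤ b := pow_le_pow_of_le_one hδ0.le hδ1.le (Nat.sub_le m₀ 2)
  have hg0 : ∀ r ∈ Ioc 0 b, 0 ≤ f r / r := fun r hr =>
    div_nonneg (hnonneg r ⟨hr.1, hr.2.trans hb⟩) hr.1.le
  have hF {s : ℝ} (hs : 0 < s) :
      ∫ r in Ioc s b, f r / r ^ (1 + α) = ∫ r in Ioc s b, f r / r / r ^ α :=
    setIntegral_congr_fun measurableSet_Ioc fun r hr => by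
      rw [Real.rpow_add (hs.trans hr.1), Real.rpow_one, div_div]
  have hterm (k : ℕ) : δ ^ ((m₀ + k : ℕ) * α) * ∫ r in Ioc (δ ^ (m₀ + k)) b, f r / r ^ (1 + α) =
      (δ ^ m₀ * δ ^ k) ^ α * ∫ r in Ioc (δ ^ m₀ * δ ^ k) b, f r / r / r ^ α := by
    rw [Real.rpow_natCast_mul hδ0.le, hF (pow_pos hδ0 _), pow_add]
  have hB : 0 ≤ (∫ r in Ioc 0 (δ ^ m₀), f r / r) +
      (δ ^ m₀) ^ α * ∫ r in Ioc (δ ^ m₀) b, f r / r / r ^ α :=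
    add_nonneg (setIntegral_nonneg measurableSet_Ioc fun r hr => hg0 r ⟨hr.1, hr.2.trans hab⟩)
      (mul_nonneg (Real.rpow_nonneg (pow_pos hδ0 m₀).le α) (setIntegral_nonneg measurableSet_Ioc
        fun r hr => div_nonneg (hg0 r ⟨(pow_pos hδ0 m₀).trans hr.1, hr.2⟩)
          (Real.rpow_nonneg ((pow_pos hδ0 m₀).trans hr.1).le α)))
  have hconst : 0 < α * (1 - δ) * δ ^ α :=
    mul_pos (mul_pos hα (sub_pos.2 hδ1)) (Real.rpow_pos_of_pos hδ0 α)
  rw [tsum_congr hterm, Real.rpow_natCast_mul hδ0.le, hF (pow_pos hδ0 _), one_div]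
  exact (tsum_rpow_mul_setIntegral_div_rpow_le (pow_pos hδ0 m₀) hab hδ0 hδ1 hα hg0
    (hdini.mono_set (Ioc_subset_Ioc_right hb))).trans (mul_le_mul_of_nonneg_right
      (inv_anti₀ hconst (mul_one_sub_mul_rpow_le_one_sub_rpow hδ0 hα.le)) hB)

theorem tail_sum_integral_bound (f : ℝ → ℝ) (δ α : ℝ) (hδ0 : 0 < δ) (hδ1 : δ < 1)
    (hα : 0 < α) (m₀ : ℕ) (hm₀ : 2 ≤ m₀)
    (hnonneg : ∀ r ∈ Ioc (0 : ℝ) 1, 0 ≤ f r)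
    (hmono : ∀ r ∈ Ioc (0 : ℝ) 1, ∀ s ∈ Ioc (0 : ℝ) 1, r ≤ s → f r ≤ f s)
    (hdini : MeasureTheory.IntegrableOn (fun r => f r / r) (Ioc (0 : ℝ) 1)) :
    (∑' k : ℕ, δ ^ ((m₀ + k : ℕ) * α) *
        ∫ r in Ioc (δ ^ (m₀ + k)) (δ ^ (m₀ - 2)), f r / r ^ (1 + α)) ≤
      (1 / (α * (1 - δ) * δ ^ α)) *
        ((∫ r in Ioc (0 : ℝ) (δ ^ m₀), f r / r) +
          δ ^ (m₀ * α) * ∫ r in Ioc (δ ^ m₀) (δ ^ (m₀ - 2)), f r / r ^ (1 + α)) :=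
  tail_sum_integral_bound_general f δ α hδ0 hδ1 hα m₀ hnonneg hdini
end

section
/- With Ψ as in the barrier construction (Ψ(x) = 2(xₙ+c)/δ − ((xₙ+c)/(2δ))² + (λ²/(8(n-1)))∑_{i=1}^{n-1}((|x_i|/δ −1)⁺)^{2+ε}, with M ≥ √(n-1)(1+4√(n-1)/λ), c ≤ δ): if 0 ≤ xₙ + c ≤ 2δ and |x'| = Mδ, then Ψ(x) ≥ 2. -/
open Set

theorem barrier_lower_bound_on_lateral_boundary (n : ℕ) (hn : 1 ≤ n)
    (lam δ M ε c : ℝ) (hlam : 0 < lam) (hlam1 : lam ≤ 1) (hδ : 0 < δ)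
    (hε : 0 < ε) (hc0 : 0 ≤ c) (hcδ : c ≤ δ)
    (hM : Real.sqrt n * (1 + 4 * Real.sqrt n / lam) ≤ M)
    (x' : EuclideanSpace ℝ (Fin n)) (xn : ℝ)
    (hxn0 : 0 ≤ xn + c) (hxn2 : xn + c ≤ 2 * δ) (hx' : ‖x'‖ = M * δ) :
    2 ≤ 2 * (xn + c) / δ - ((xn + c) / (2 * δ)) ^ 2
        + (lam ^ 2 / (8 * n)) * ∑ i : Fin n, (max (|x' i| / δ - 1) 0) ^ ((2 : ℝ) + ε) := by
  have hn0 : (0:ℝ) < n := by exact_mod_cast Nat.lt_of_lt_of_le Nat.zero_lt_one hn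
  have hs1 : (1:ℝ) ≤ Real.sqrt n := by
    rw [show (1:ℝ) = Real.sqrt 1 by simp]
    exact Real.sqrt_le_sqrt (by exact_mod_cast hn)
  have hs0 : (0:ℝ) < Real.sqrt n := lt_of_lt_of_le one_pos hs1
  -- pick coordinate with max abs value
  have hne : (Finset.univ : Finset (Fin n)).Nonempty := by
    have : Nonempty (Fin n) := ⟨⟨0, hn⟩⟩
    exact Finset.univ_nonempty
  obtain ⟨i, -, hi⟩ := Finset.exists_max_image Finset.univ (fun j => |x' j|) hne
  have hi' : ∀ j, |x' j| ≤ |x' i| := fun j => hi j (Finset.mem_univ j)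
  -- ‖x'‖ ≤ √n * |x' i|
  have hnorm : ‖x'‖ ≤ Real.sqrt n * |x' i| := by
    rw [EuclideanSpace.norm_eq]
    have h1 : ∑ j : Fin n, ‖x' j‖ ^ 2 ≤ (n : ℝ) * |x' i| ^ 2 := by
      calc ∑ j : Fin n, ‖x' j‖ ^ 2 ≤ ∑ j : Fin n, |x' i| ^ 2 := by
            apply Finset.sum_le_sum
            intro j _
            have := hi' j
            rw [Real.norm_eq_abs]
            exact pow_le_pow_left₀ (abs_nonneg _) this 2
        _ = (n : ℝ) * |x' i| ^ 2 := by simp [Finset.sum_const, mul_comm]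
    calc Real.sqrt (∑ j : Fin n, ‖x' j‖ ^ 2) ≤ Real.sqrt ((n:ℝ) * |x' i| ^ 2) :=
          Real.sqrt_le_sqrt h1
      _ = Real.sqrt n * |x' i| := by
          rw [Real.sqrt_mul (le_of_lt hn0), Real.sqrt_sq (abs_nonneg _)]
  -- so |x' i| ≥ M δ / √n
  have hxi : M * δ / Real.sqrt n ≤ |x' i| := by
    rw [div_le_iff₀ hs0] at *
    nlinarith [hx' ▸ hnorm]
  have hMs : 1 + 4 * Real.sqrt n / lam ≤ M / Real.sqrt n := by
    rw [le_div_iff₀ hs0]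
    linarith [hM]
  have hbase : 4 * Real.sqrt n / lam ≤ max (|x' i| / δ - 1) 0 := by
    have h1 : M / Real.sqrt n ≤ |x' i| / δ := by
      rw [div_le_div_iff₀ hs0 hδ]
      calc M * δ = M * δ / Real.sqrt n * Real.sqrt n := by field_simp
        _ ≤ |x' i| * Real.sqrt n := by
            exact mul_le_mul_of_nonneg_right hxi (le_of_lt hs0)
    have : 4 * Real.sqrt n / lam ≤ |x' i| / δ - 1 := by linarith
    exact le_max_of_le_left this
  have hb1 : (1:ℝ) ≤ 4 * Real.sqrt n / lam := by
    rw [le_div_iff₀ hlam]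
    nlinarith
  set a := max (|x' i| / δ - 1) 0 with ha
  have ha0 : (0:ℝ) ≤ a := le_max_right _ _
  -- a ^ (2+ε) ≥ (4√n/λ)^(2+ε) ≥ (4√n/λ)^2 = 16 n / λ²
  have hkey : 16 * n / lam ^ 2 ≤ a ^ ((2:ℝ) + ε) := by
    have h2 : (4 * Real.sqrt n / lam) ^ ((2:ℝ) + ε) ≤ a ^ ((2:ℝ) + ε) :=
      Real.rpow_le_rpow (by positivity) hbase (by linarith)
    have h3 : (4 * Real.sqrt n / lam) ^ ((2:ℝ)) ≤ (4 * Real.sqrt n / lam) ^ ((2:ℝ) + ε) :=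
      Real.rpow_le_rpow_of_exponent_le hb1 (by linarith)
    have h4 : (4 * Real.sqrt n / lam) ^ ((2:ℝ)) = 16 * n / lam ^ 2 := by
      rw [show ((2:ℝ)) = ((2:ℕ):ℝ) by norm_num, Real.rpow_natCast]
      rw [div_pow]
      rw [mul_pow]
      rw [Real.sq_sqrt (le_of_lt hn0)]
      norm_num
    linarith
  -- sum ≥ term at i
  have hsum : 16 * n / lam ^ 2 ≤ ∑ j : Fin n, (max (|x' j| / δ - 1) 0) ^ ((2:ℝ) + ε) := by
    refine le_trans hkey ?_
    rw [ha]
    exact Finset.single_le_sum (f := fun j => (max (|x' j| / δ - 1) 0) ^ ((2:ℝ) + ε))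
      (fun j _ => Real.rpow_nonneg (le_max_right _ _) _) (Finset.mem_univ i)
  have hfrac : 2 ≤ (lam ^ 2 / (8 * n)) * ∑ j : Fin n, (max (|x' j| / δ - 1) 0) ^ ((2:ℝ) + ε) := by
    have hc : (0:ℝ) < lam ^ 2 / (8 * n) := by positivity
    calc (2:ℝ) = lam ^ 2 / (8 * n) * (16 * n / lam ^ 2) := by field_simp; ring
      _ ≤ _ := mul_le_mul_of_nonneg_left hsum (le_of_lt hc)
  -- first part nonneg
  have hfirst : 0 ≤ 2 * (xn + c) / δ - ((xn + c) / (2 * δ)) ^ 2 := by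
    set t := xn + c
    have h1 : (t / (2 * δ)) ^ 2 ≤ t / (2 * δ) := by
      have h2 : t / (2 * δ) ≤ 1 := by
        rw [div_le_one (by positivity)]; linarith
      have h3 : 0 ≤ t / (2 * δ) := by positivity
      nlinarith
    have h4 : t / (2 * δ) ≤ 2 * t / δ := by
      rw [div_le_div_iff₀ (by positivity) hδ]
      nlinarith
    linarith
  linarith
end
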